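/- Let τ : F → G be a pointwise cofibration of diagrams on an inverse category C, and X a Reedy fibrant diagram. Then the natural transformation of exponential diagrams (− ∘ τ) : [G, X] → [F, X] is a Reedy fibration. Consequently, if Reedy fibrant diagrams on C have fibrant limits, the map Nat(G, X) → Nat(F, X) is a fibration; and taking F = the initial (empty) diagram, if F is pointwise cofibrant then Nat(F, X) is fibrant. -/

import Mathlib

/-- The data of a two-level type theory (over Lean's strict layer, where
strict equality is `Eq` and strict isomorphism is `Equiv`): a fibrancy
predicate on pretypes, fibrant identity types with their elimination rule
into fibrant families, and closure of fibrant types under `Π` and `Σ`. -/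
structure TLTT : Type 1 where
  Fib : Type → Prop
  Id : (A : Type) → A → A → Type
  idRefl : {A : Type} → (a : A) → Id A a a
  fibId : ∀ {A : Type}, Fib A → ∀ a b : A, Fib (Id A a b)
  idElim : {A : Type} → (a : A) → (P : (b : A) → Id A a b → Type) →
    (∀ b p, Fib (P b p)) → P a (idRefl a) → ∀ b p, P b p
  idComp : ∀ {A : Type} (a : A) (P : (b : A) → Id A a b → Type)
      (hP : ∀ b p, Fib (P b p)) (d : P a (idRefl a)),
      idElim a P hP d a (idRefl a) = d
  fibUnit : Fib PUnit
  fibPi : ∀ {A : Type} {B : A → Type}, Fib A → (∀ a, Fib (B a)) → Fib (∀ a, B a)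
  fibSigma : ∀ {A : Type} {B : A → Type}, Fib A → (∀ a, Fib (B a)) → Fib (Σ a, B a)

namespace TwoLevel

/-- A pretype is essentially fibrant if it is strictly isomorphic to a fibrant type. -/
def EssFib (T : TLTT) (A : Type) : Prop := ∃ B : Type, T.Fib B ∧ Nonempty (A ≃ B)

/-- A pretype is finite if it is strictly isomorphic to some `Fin n`. -/
def IsFinite (A : Type) : Prop := ∃ n : ℕ, Nonempty (A ≃ Fin n)

/-- A map is a fibration if all of its strict fibres are essentially fibrant. -/
def IsFibration (T : TLTT) {E B : Type} (p : E → B) : Prop :=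
  ∀ b : B, EssFib T { e : E // p e = b }

/-- Homotopy equivalence of pretypes with respect to the fibrant identity type. -/
def IsHEquiv (T : TLTT) {A B : Type} (f : A → B) : Prop :=
  ∃ g : B → A, (∀ a, Nonempty (T.Id A (g (f a)) a)) ∧ (∀ b, Nonempty (T.Id B (f (g b)) b))

/-- A pretype is cofibrant if exponentiating out of it preserves fibrations. -/
def Cofibrant (T : TLTT) (A : Type) : Prop :=
  ∀ {X Y : Type} (p : X → Y), IsFibration T p → IsFibration T (fun g : A → X => p ∘ g)

/-- A cofibration is a complemented monomorphism with cofibrant complement. -/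
def IsCofibration (T : TLTT) {A B : Type} (f : A → B) : Prop :=
  ∃ Ac : Type, Cofibrant T Ac ∧ ∃ g : Ac → B, Function.Bijective (Sum.elim f g)

end TwoLevel
/-- Strict categories: categorical laws hold up to strict equality. -/
structure SCat : Type 1 where
  Obj : Type
  Hom : Obj → Obj → Type
  id : ∀ x, Hom x x
  comp : ∀ {x y z}, Hom y z → Hom x y → Hom x z
  id_comp : ∀ {x y} (f : Hom x y), comp (id y) f = f
  comp_id : ∀ {x y} (f : Hom x y), comp f (id x) = f
  assoc : ∀ {w x y z} (h : Hom y z) (g : Hom x y) (f : Hom w x),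
    comp (comp h g) f = comp h (comp g f)

/-- Strict (pretype-valued) diagrams on a strict category. -/
structure SFunctor (C : SCat) : Type 1 where
  obj : C.Obj → Type
  map : ∀ {x y}, C.Hom x y → obj x → obj y
  map_id : ∀ {x} (a : obj x), map (C.id x) a = a
  map_comp : ∀ {x y z} (g : C.Hom y z) (f : C.Hom x y) (a : obj x),
    map g (map f a) = map (C.comp g f) a

/-- Strict natural transformations of diagrams. -/
structure SNat {C : SCat} (X Y : SFunctor C) : Type where
  app : ∀ i, X.obj i → Y.obj i
  nat : ∀ {i j} (f : C.Hom i j) (a : X.obj i), Y.map f (app i a) = app j (X.map f a)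

theorem SNat.ext' {C : SCat} {X Y : SFunctor C} {f g : SNat X Y}
    (h : f.app = g.app) : f = g := by
  cases f; cases g; cases h; rfl

/-- Composition of natural transformations. -/
def natComp {C : SCat} {X Y Z : SFunctor C} (g : SNat Y Z) (f : SNat X Y) : SNat X Z :=
  ⟨fun i a => g.app i (f.app i a), by intro i j u a; rw [g.nat, f.nat]⟩

/-- The (strict) limit of a diagram, realised as the pretype of cones with tip `1`. -/
def SLimit (C : SCat) (X : SFunctor C) : Type :=
  { c : ∀ i, X.obj i // ∀ ⦃i j⦄ (f : C.Hom i j), X.map f (c i) = c j }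

/-- The constant diagram. -/
def constF (C : SCat) (A : Type) : SFunctor C :=
  ⟨fun _ => A, fun _ a => a, fun _ => rfl, fun _ _ _ => rfl⟩

/-- `f` is not an identity morphism. -/
def NotId (C : SCat) {x y : C.Obj} (f : C.Hom x y) : Prop :=
  ¬ ∃ _h : x = y, HEq f (C.id x)

/-- Objects of the reduced coslice `z ⫽ C`. -/
def RedCoslice (C : SCat) (z : C.Obj) : Type :=
  Σ y : C.Obj, { f : C.Hom z y // NotId C f }

/-- The reduced coslice category `z ⫽ C`. -/
def RedCosliceCat (C : SCat) (z : C.Obj) : SCat where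
  Obj := RedCoslice C z
  Hom w w' := { h : C.Hom w.1 w'.1 // C.comp h w.2.1 = w'.2.1 }
  id w := ⟨C.id w.1, C.id_comp _⟩
  comp h g := ⟨C.comp h.1 g.1, by rw [C.assoc, g.2, h.2]⟩
  id_comp f := Subtype.ext (C.id_comp _)
  comp_id f := Subtype.ext (C.comp_id _)
  assoc h g f := Subtype.ext (C.assoc _ _ _)

/-- Restriction of a diagram along the forgetful functor `z ⫽ C → C`. -/
def restrictRC {C : SCat} (X : SFunctor C) (z : C.Obj) : SFunctor (RedCosliceCat C z) where
  obj w := X.obj w.1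
  map h a := X.map h.1 a
  map_id a := X.map_id a
  map_comp g f a := X.map_comp g.1 f.1 a

/-- The matching object `M_z^X`: the limit of `X` over the reduced coslice. -/
def Matching {C : SCat} (X : SFunctor C) (z : C.Obj) : Type :=
  SLimit (RedCosliceCat C z) (restrictRC X z)

/-- The canonical map `X_z → M_z^X`. -/
def canMatch {C : SCat} (X : SFunctor C) (z : C.Obj) (x : X.obj z) : Matching X z :=
  ⟨fun w => X.map w.2.1 x, by
    intro w w' h
    exact (X.map_comp h.1 w.2.1 x).trans (by rw [h.2])⟩

/-- A diagram is Reedy fibrant if each canonical map `X_z → M_z^X` is a fibration. -/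
def ReedyFibrant (T : TLTT) {C : SCat} (X : SFunctor C) : Prop :=
  ∀ z, TwoLevel.IsFibration T (canMatch X z)

/-- The map induced on matching objects by a natural transformation. -/
def matchNat {C : SCat} {X Y : SFunctor C} (p : SNat X Y) (z : C.Obj) :
    Matching X z → Matching Y z :=
  fun c => ⟨fun w => p.app w.1 (c.1 w), by
    intro w w' h
    exact (p.nat h.1 (c.1 w)).trans (congrArg (p.app w'.1) (c.2 h))⟩

/-- The relative matching map `X_n → M_n^X ×_{M_n^Y} Y_n` of `p : X → Y`. -/
def relMatchMap {C : SCat} {X Y : SFunctor C} (p : SNat X Y) (n : C.Obj) :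
    X.obj n → { q : Matching X n × Y.obj n // matchNat p n q.1 = canMatch Y n q.2 } :=
  fun x => ⟨(canMatch X n x, p.app n x), by
    apply Subtype.ext
    funext w
    exact (p.nat w.2.1 x).symm⟩

/-- A natural transformation is a Reedy fibration if all of its relative matching
maps are fibrations. -/
def IsReedyFibration (T : TLTT) {C : SCat} {X Y : SFunctor C} (p : SNat X Y) : Prop :=
  ∀ n, TwoLevel.IsFibration T (relMatchMap p n)

/-- An inverse category: a strict category with a rank function such that every
morphism either strictly decreases the rank or is an identity. -/
def IsInverse (C : SCat) : Prop :=
  ∃ φ : C.Obj → ℕ, ∀ ⦃x y⦄ (f : C.Hom x y), φ x > φ y ∨ ∃ h : x = y, HEq f (C.id x)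

/-- The map induced on limits by a natural transformation. -/
def limMap {C : SCat} {X Y : SFunctor C} (p : SNat X Y) : SLimit C X → SLimit C Y :=
  fun c => ⟨fun i => p.app i (c.1 i), by
    intro i j f
    exact (p.nat f (c.1 i)).trans (congrArg (p.app j) (c.2 f))⟩

/-- An inverse category is admissible if Reedy fibrant diagrams over all of its
reduced coslices have essentially fibrant limits. -/
def Admissible (T : TLTT) (C : SCat) : Prop :=
  ∀ (z : C.Obj) (Y : SFunctor (RedCosliceCat C z)), ReedyFibrant T Y →
    TwoLevel.EssFib T (SLimit (RedCosliceCat C z) Y)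

/-- The pullback of diagrams `A ×_B X` along `f : A → B` and `p : X → B`,
computed pointwise. -/
def pbFunctor {C : SCat} {A B X : SFunctor C} (f : SNat A B) (p : SNat X B) :
    SFunctor C where
  obj i := { z : A.obj i × X.obj i // f.app i z.1 = p.app i z.2 }
  map g z := ⟨(A.map g z.1.1, X.map g z.1.2), by rw [← f.nat, ← p.nat, z.2]⟩
  map_id z := by
    apply Subtype.ext
    exact Prod.ext (A.map_id _) (X.map_id _)
  map_comp g h z := by
    apply Subtype.ext
    exact Prod.ext (A.map_comp _ _ _) (X.map_comp _ _ _)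

/-- Projection from the pullback of diagrams to the base. -/
def pbProj {C : SCat} {A B X : SFunctor C} (f : SNat A B) (p : SNat X B) :
    SNat (pbFunctor f p) A :=
  ⟨fun _ z => z.1.1, fun _ _ => rfl⟩

/-- A pushout square of diagrams, via its universal property. -/
def IsPushout {C : SCat} {P A B Q : SFunctor C} (f : SNat P A) (g : SNat P B)
    (ia : SNat A Q) (ib : SNat B Q) : Prop :=
  natComp ia f = natComp ib g ∧
  ∀ (W : SFunctor C) (u : SNat A W) (v : SNat B W),
    natComp u f = natComp v g → ∃! w : SNat Q W, natComp w ia = u ∧ natComp w ib = v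
/-- Hom-pretypes of the category `C* = 1 ⋆ C` obtained by freely adjoining an
initial object `none`. -/
def OHom (C : SCat) : Option C.Obj → Option C.Obj → Type
  | none, _ => PUnit
  | some _, none => Empty
  | some a, some b => C.Hom a b

def oid (C : SCat) : ∀ x : Option C.Obj, OHom C x x
  | none => PUnit.unit
  | some a => C.id a

def ocomp (C : SCat) : ∀ {x y z : Option C.Obj}, OHom C y z → OHom C x y → OHom C x z
  | none, _, _, _, _ => PUnit.unit
  | some _, none, _, _, f => f.elim
  | some _, some _, none, g, _ => g.elim
  | some _, some _, some _, g, f => C.comp g f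

/-- The category `C* = 1 ⋆ C`. -/
def CStar (C : SCat) : SCat where
  Obj := Option C.Obj
  Hom := OHom C
  id := oid C
  comp := ocomp C
  id_comp {x y} f := by
    cases x <;> cases y
    · rfl
    · rfl
    · exact f.elim
    · exact C.id_comp f
  comp_id {x y} f := by
    cases x <;> cases y
    · rfl
    · rfl
    · exact f.elim
    · exact C.comp_id f
  assoc {w x y z} h g f := by
    cases w <;> cases x <;> cases y <;> cases z <;>
      first
        | rfl
        | exact f.elim
        | exact g.elim
        | exact h.elim
        | exact C.assoc h g f

/-- Restriction of a diagram on `C*` to `C`. -/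
def restrictC {C : SCat} (X : SFunctor (CStar C)) : SFunctor C where
  obj i := X.obj (some i)
  map {i j} f a := X.map (x := some i) (y := some j) f a
  map_id a := X.map_id a
  map_comp g f a := X.map_comp (x := some _) (y := some _) (z := some _) g f a

/-- Restriction of a natural transformation of diagrams on `C*` to `C`. -/
def restrictNat {C : SCat} {F G : SFunctor (CStar C)} (η : SNat F G) :
    SNat (restrictC F) (restrictC G) :=
  ⟨fun i a => η.app (some i) a, fun f a => η.nat (i := some _) (j := some _) f a⟩

/-- The canonical map `X(*) → lim_C X`. -/
def canLim {C : SCat} (X : SFunctor (CStar C)) : X.obj none → SLimit C (restrictC X) :=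
  fun x => ⟨fun i => X.map (x := none) (y := some i) PUnit.unit x, by
    intro i j f
    exact X.map_comp (x := none) (y := some i) (z := some j) f PUnit.unit x⟩
/-- The product of a diagram `F` with the Yoneda (corepresentable) diagram `C(d, −)`. -/
def yonProd {C : SCat} (F : SFunctor C) (d : C.Obj) : SFunctor C where
  obj c := F.obj c × C.Hom d c
  map f z := (F.map f z.1, C.comp f z.2)
  map_id z := by
    obtain ⟨a, g⟩ := z
    show (F.map (C.id _) a, C.comp (C.id _) g) = (a, g)
    rw [F.map_id, C.id_comp]
  map_comp g f z := by
    obtain ⟨a, u⟩ := z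
    show (F.map g (F.map f a), C.comp g (C.comp f u)) = (F.map (C.comp g f) a, C.comp (C.comp g f) u)
    rw [F.map_comp, C.assoc]

/-- The exponential diagram `[F, X]`, defined via Yoneda:
`[F, X](d) = Nat(F × C(d,−), X)`. -/
def expF {C : SCat} (F X : SFunctor C) : SFunctor C where
  obj d := SNat (yonProd F d) X
  map {d d'} h η :=
    ⟨fun c z => η.app c (z.1, C.comp z.2 h), by
      intro c c' f z
      refine (η.nat f (z.1, C.comp z.2 h)).trans ?_
      show η.app c' (F.map f z.1, C.comp f (C.comp z.2 h)) = η.app c' (F.map f z.1, C.comp (C.comp f z.2) h)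
      rw [C.assoc]⟩
  map_id {d} η := by
    apply SNat.ext'
    funext c z
    show η.app c (z.1, C.comp z.2 (C.id d)) = η.app c z
    rw [C.comp_id]
    rfl
  map_comp g f η := by
    apply SNat.ext'
    funext c z
    show η.app c (z.1, C.comp (C.comp z.2 g) f) = η.app c (z.1, C.comp z.2 (C.comp g f))
    rw [C.assoc]

/-- Whiskering a natural transformation with the Yoneda factor. -/
def prodWhisker {C : SCat} {F G : SFunctor C} (τ : SNat F G) (d : C.Obj) :
    SNat (yonProd F d) (yonProd G d) :=
  ⟨fun c z => (τ.app c z.1, z.2), by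
    intro c c' f z
    show (G.map f (τ.app c z.1), C.comp f z.2) = (τ.app c' (F.map f z.1), C.comp f z.2)
    rw [τ.nat]⟩

/-- The natural transformation `(− ∘ τ) : [G, X] → [F, X]` induced on exponentials
by precomposition with `τ : F → G`. -/
def expMap {C : SCat} {F G : SFunctor C} (τ : SNat F G) (X : SFunctor C) :
    SNat (expF G X) (expF F X) :=
  ⟨fun d η => natComp η (prodWhisker τ d), fun _ _ => SNat.ext' rfl⟩
/-- Morphisms `[m] → [k]` of the semi-simplex category `Δ₊ᵒᵖ`:
strictly monotone maps `Fin (k+1) → Fin (m+1)`. -/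
def DeltaHom (m k : ℕ) : Type := { f : Fin (k+1) → Fin (m+1) // StrictMono f }

/-- The semi-simplex category `Δ₊ᵒᵖ`. -/
@[reducible] def DeltaOp : SCat where
  Obj := ℕ
  Hom := DeltaHom
  id _ := ⟨_root_.id, strictMono_id⟩
  comp g f := ⟨f.1 ∘ g.1, f.2.comp g.2⟩
  id_comp _ := Subtype.ext rfl
  comp_id _ := Subtype.ext rfl
  assoc _ _ _ := Subtype.ext rfl

/-- A semi-simplicial set/type is a diagram on `Δ₊ᵒᵖ`. -/
abbrev SSDiagram : Type 1 := SFunctor DeltaOp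

theorem strictMono_fin_le {a b : ℕ} (g : Fin a → Fin b) (hg : StrictMono g) : a ≤ b := by
  simpa using Fintype.card_le_of_injective g hg.injective

set_option linter.deprecated false in
theorem strictMono_fin_id {a : ℕ} (g : Fin a → Fin a) (hg : StrictMono g) :
    ∀ i, g i = i := by
  have hsur : Function.Surjective g := Finite.injective_iff_surjective.mp hg.injective
  have hid : g = fun i => i := by
    apply (hg.range_inj strictMono_id).mp
    rw [Set.range_id]
    exact Set.range_eq_univ.mpr hsur
  intro i; rw [hid]

/-- A subfunctor of the Yoneda (representable) semi-simplicial set `Δ^n`,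
given by a family of propositions closed under the functorial action. -/
structure SubP (n : ℕ) : Type where
  mem : ∀ k : ℕ, DeltaHom n k → Prop
  closed : ∀ ⦃k l : ℕ⦄ (g : DeltaHom k l) (f : DeltaHom n k),
    mem k f → mem l (DeltaOp.comp g f)

/-- The semi-simplicial set associated to a subfunctor of `Δ^n`. -/
def SubP.toF {n : ℕ} (S : SubP n) : SSDiagram where
  obj k := { f : DeltaHom n k // S.mem k f }
  map g f := ⟨DeltaOp.comp g f.1, S.closed g f.1 f.2⟩
  map_id _ := Subtype.ext (DeltaOp.id_comp _)
  map_comp _ _ _ := Subtype.ext (DeltaOp.assoc _ _ _).symm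

def SubP.le {n : ℕ} (S S' : SubP n) : Prop := ∀ k f, S.mem k f → S'.mem k f

/-- The inclusion of sub-semi-simplicial sets. -/
def SubP.incl {n : ℕ} {S S' : SubP n} (h : S.le S') : SNat S.toF S'.toF :=
  ⟨fun k f => ⟨f.1, h k f.1 f.2⟩, fun _ _ => rfl⟩

/-- The full subfunctor, i.e. the representable `Δ^n` itself. -/
def fullSub (n : ℕ) : SubP n := ⟨fun _ _ => True, by intros; trivial⟩

/-- The membership predicate of the spine `Sp^n`: all vertices, together with
the consecutive edges `i → i+1`. -/
def spineMem (n : ℕ) : ∀ k : ℕ, DeltaHom n k → Prop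
  | 0, _ => True
  | 1, f => (f.1 1 : ℕ) = (f.1 0 : ℕ) + 1
  | _ + 2, _ => False

/-- The spine `Sp^n` as a subfunctor of `Δ^n`. -/
def spineSub (n : ℕ) : SubP n where
  mem := spineMem n
  closed := by
    intro k l g f hf
    have hlk : l + 1 ≤ k + 1 := strictMono_fin_le g.1 g.2
    rcases l with _ | _ | l
    · trivial
    · rcases k with _ | _ | k
      · exact absurd hlk (by omega)
      · show ((f.1 (g.1 1) : Fin (n+1)) : ℕ) = ((f.1 (g.1 0) : Fin (n+1)) : ℕ) + 1
        have h0 : g.1 0 = 0 := strictMono_fin_id g.1 g.2 0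
        have h1 : g.1 1 = 1 := strictMono_fin_id g.1 g.2 1
        rw [h0, h1]
        exact hf
      · exact hf.elim
    · rcases k with _ | _ | k
      · exact absurd hlk (by omega)
      · exact absurd hlk (by omega)
      · exact hf.elim

/-- The membership predicate of the horn `Λ^n_k`: everything except the top cell
and the `k`-th face (the strictly monotone map skipping the value `k`,
described numerically). -/
def hornMem (n k : ℕ) (m : ℕ) (f : DeltaHom n m) : Prop :=
  if m = n then False
  else if m + 1 = n then
    ¬ (∀ i : Fin (m + 1), (f.1 i : ℕ) = if (i : ℕ) < k then (i : ℕ) else (i : ℕ) + 1)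
  else True

/-- The horn `Λ^n_k` as a subfunctor of `Δ^n`. -/
def hornSub (n k : ℕ) : SubP n where
  mem := hornMem n k
  closed := by
    intro m l g f hf
    have hlm : l + 1 ≤ m + 1 := strictMono_fin_le g.1 g.2
    have hmn : m + 1 ≤ n + 1 := strictMono_fin_le f.1 f.2
    unfold hornMem at hf ⊢
    by_cases hl : l = n
    · rw [if_pos hl]
      have hm : m = n := by omega
      rw [if_pos hm] at hf
      exact hf
    · rw [if_neg hl]
      by_cases hl1 : l + 1 = n
      · rw [if_pos hl1]
        by_cases hm : m = n
        · rw [if_pos hm] at hf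
          exact hf.elim
        · have hm1 : m + 1 = n := by omega
          rw [if_neg hm, if_pos hm1] at hf
          intro hs
          apply hf
          intro i
          have hml : m = l := by omega
          subst hml
          have hgi : g.1 i = i := strictMono_fin_id g.1 g.2 i
          have h2 : ((f.1 (g.1 i) : Fin (n+1)) : ℕ) =
              if (i : ℕ) < k then (i : ℕ) else (i : ℕ) + 1 := hs i
          rw [hgi] at h2
          exact h2
      · rw [if_neg hl1]
        trivial

/-- The spine is contained in `Δ^n`. -/
theorem spine_le_full (n : ℕ) : (spineSub n).le (fullSub n) := fun _ _ _ => trivial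

/-- The horn is contained in `Δ^n`. -/
theorem horn_le_full (n k : ℕ) : (hornSub n k).le (fullSub n) := fun _ _ _ => trivial

/-- The two vertex inclusions of an edge. -/
def V0 : DeltaHom 1 0 :=
  ⟨fun _ => 0, by
    intro a b hab
    exfalso
    have ha := a.isLt
    have hb := b.isLt
    rw [Fin.lt_def] at hab
    omega⟩

def V1 : DeltaHom 1 0 :=
  ⟨fun _ => 1, by
    intro a b hab
    exfalso
    have ha := a.isLt
    have hb := b.isLt
    rw [Fin.lt_def] at hab
    omega⟩

/-- The three faces of a 2-simplex: `Dface j` skips the vertex `j`. -/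
def Dface (j : Fin 3) : DeltaHom 2 1 := ⟨Fin.succAbove j, Fin.strictMono_succAbove j⟩

/-- The fibre of `X₁` over a pair of vertices: edges from `a` to `b`. -/
def EdgeT (X : SSDiagram) (a b : X.obj 0) : Type :=
  { e : X.obj 1 // X.map (x := 1) (y := 0) V0 e = a ∧ X.map (x := 1) (y := 0) V1 e = b }

/-- The fibre of `X₂` over a boundary triangle `(f, g, h)`. -/
def TriT (X : SSDiagram) {a b c : X.obj 0}
    (f : EdgeT X a b) (g : EdgeT X b c) (h : EdgeT X a c) : Type :=
  { t : X.obj 2 // X.map (x := 2) (y := 1) (Dface 2) t = f.1 ∧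
      X.map (x := 2) (y := 1) (Dface 0) t = g.1 ∧ X.map (x := 2) (y := 1) (Dface 1) t = h.1 }

/-- The Segal condition: locality with respect to all spine inclusions. -/
def SegalCondition (T : TLTT) (X : SSDiagram) : Prop :=
  ∀ n : ℕ, TwoLevel.IsHEquiv T
    (fun η : SNat (fullSub n).toF X => natComp η (SubP.incl (spine_le_full n)))
/-- The type of homotopy equivalences (with respect to the fibrant identity
type) between two pretypes. -/
def HEquivT (T : TLTT) (A B : Type) : Type :=
  Σ f : A → B, Σ g : B → A, (∀ a, T.Id A (g (f a)) a) × (∀ b, T.Id B (f (g b)) b)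

/-- The identity equivalence. -/
def idEquivT (T : TLTT) (A : Type) : HEquivT T A A :=
  ⟨_root_.id, _root_.id, fun a => T.idRefl a, fun b => T.idRefl b⟩

/-! Write a matching element of `[G, X]` at `n` as a transformation `β : G↑ → X↑` over the
reduced coslice `n ⫽ C`. An element of `[G, X]_n` over it is a transformation over the full
coslice `n / C`, which for an inverse category is `(n ⫽ C)*`: it amounts to one more map
`u : G_n → X_n` compatible with `β` through the matching maps of `G` and `X`. So the fibres of
`[G, X] → [F, X]` are fibres of `(G_n → X_n) → (G_n → M_n X) ×_{F_n → M_n X} (F_n → X_n)`, which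
are fibrant because `τ_n` is a cofibration and `X_n → M_n X` a fibration. The statements about
`Nat(−, X)` follow since `Nat(F, X) ≅ lim [F, X]`, and limits take Reedy fibrations to
fibrations when Reedy fibrant diagrams have fibrant limits. -/

open TwoLevel

namespace TwoLevel

variable {T : TLTT}

theorem EssFib.of_equiv {A B : Type} (h : EssFib T B) (e : A ≃ B) : EssFib T A := by
  obtain ⟨B', hB', ⟨e'⟩⟩ := h
  exact ⟨B', hB', ⟨e.trans e'⟩⟩

theorem IsFibration.of_equiv_comm {A B A' B' : Type} {p : A → B} {p' : A' → B'}
    (hp' : IsFibration T p') (eA : A ≃ A') (eB : B ≃ B') (h : ∀ a, p' (eA a) = eB (p a)) :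
    IsFibration T p := fun b =>
  (hp' (eB b)).of_equiv (eA.subtypeEquiv fun a => by rw [h, eB.apply_eq_iff_eq])

/-- Fibres of `(B → X) → (B → M) ×_{A → M} (A → X)` for a cofibration `i : A → B` and a
fibration `p : X → M`. -/
theorem IsCofibration.essFib_extensions {A B X M : Type} {i : A → B}
    (hi : IsCofibration T i) {p : X → M} (hp : IsFibration T p) (m : B → M) (v : A → X)
    (hv : ∀ a, p (v a) = m (i a)) :
    EssFib T {u : B → X // (∀ b, p (u b) = m b) ∧ ∀ a, u (i a) = v a} := by
  obtain ⟨Ac, hAc, g, hbij⟩ := hi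
  let e : A ⊕ Ac ≃ B := Equiv.ofBijective _ hbij
  have extend_spec (q : {q : Ac → X // p ∘ q = m ∘ g}) (s : A ⊕ Ac) :
      p (Sum.elim v q.1 s) = m (e s) := by
    cases s with
    | inl a => exact hv a
    | inr c => exact congrFun q.2 c
  refine (hAc p hp (m ∘ g)).of_equiv
    { toFun := fun u => ⟨u.1 ∘ g, funext fun c => u.2.1 (g c)⟩
      invFun := fun q => ⟨fun b => Sum.elim v q.1 (e.symm b),
        fun b => (extend_spec q (e.symm b)).trans (by rw [e.apply_symm_apply]),
        fun a => by
          show Sum.elim v q.1 (e.symm (e (Sum.inl a))) = v a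
          rw [e.symm_apply_apply]; rfl⟩
      left_inv := fun u => Subtype.ext (funext fun b => ?_)
      right_inv := fun q => Subtype.ext (funext fun c => by
        show Sum.elim v q.1 (e.symm (e (Sum.inr c))) = q.1 c
        rw [e.symm_apply_apply]; rfl) }
  obtain ⟨s, rfl⟩ := e.surjective b
  show Sum.elim v (u.1 ∘ g) (e.symm (e s)) = u.1 (e s)
  rw [e.symm_apply_apply]
  cases s with
  | inl a => exact (u.2.2 a).symm
  | inr c => rfl

theorem isCofibration_emptyElim {A : Type} (hA : Cofibrant T A) :
    IsCofibration T (Empty.elim : Empty → A) :=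
  ⟨A, hA, id, by
    convert (Equiv.emptySum Empty A).bijective using 1
    funext s
    rcases s with (x | a)
    · exact x.elim
    · rfl⟩

end TwoLevel

section Diagrams

variable {C : SCat}

theorem IsInverse.notId_comp (hC : IsInverse C) {n c d : C.Obj} {f : C.Hom n c}
    (hf : NotId C f) (h : C.Hom c d) : NotId C (C.comp h f) := by
  obtain ⟨φ, hφ⟩ := hC
  rcases hφ f with hfφ | hfid
  · rcases hφ h with hhφ | ⟨rfl, hh⟩
    · rintro ⟨rfl, -⟩
      omega
    · rwa [eq_of_heq hh, C.id_comp]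
  · exact absurd hfid hf

@[elab_as_elim]
theorem notId_cases {x : C.Obj} {motive : ∀ y, C.Hom x y → Prop} {y : C.Obj}
    (f : C.Hom x y) (notId : ∀ y (f : C.Hom x y), NotId C f → motive y f)
    (id : motive x (C.id x)) : motive y f := by
  by_cases hf : NotId C f
  · exact notId y f hf
  · obtain ⟨rfl, hf⟩ := not_not.mp hf
    rwa [eq_of_heq hf]

theorem matchNat_canMatch {X Y : SFunctor C} (p : SNat X Y) (n : C.Obj) (x : X.obj n) :
    matchNat p n (canMatch X n x) = canMatch Y n (p.app n x) :=
  Subtype.ext (funext fun w => (p.nat w.2.1 x).symm)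

theorem relMatchMap_eq_iff {X Y : SFunctor C} (p : SNat X Y) (n : C.Obj) (x : X.obj n)
    {q : Matching X n × Y.obj n} (hq : matchNat p n q.1 = canMatch Y n q.2) :
    relMatchMap p n x = ⟨q, hq⟩ ↔ canMatch X n x = q.1 ∧ p.app n x = q.2 :=
  Subtype.ext_iff.trans Prod.ext_iff

theorem IsReedyFibration.reedyFibrant_of_unique {T : TLTT} {E B : SFunctor C} {p : SNat E B}
    [∀ i, Unique (B.obj i)] (hp : IsReedyFibration T p) : ReedyFibrant T E := by
  intro z c
  have hmatch : matchNat p z c = canMatch B z default :=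
    Subtype.ext (funext fun w => Subsingleton.elim (α := B.obj w.1) _ _)
  refine (hp z ⟨(c, default), hmatch⟩).of_equiv (Equiv.subtypeEquivRight fun e => ?_)
  rw [relMatchMap_eq_iff]
  exact (and_iff_left (Subsingleton.elim _ _)).symm

def fibreF {E B : SFunctor C} (p : SNat E B) (b : SLimit C B) : SFunctor C where
  obj i := {e : E.obj i // p.app i e = b.1 i}
  map f e := ⟨E.map f e.1, by rw [← p.nat, e.2, b.2]⟩
  map_id e := Subtype.ext (E.map_id _)
  map_comp g f e := Subtype.ext (E.map_comp _ _ _)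

def limitFibreEquiv {E B : SFunctor C} (p : SNat E B) (b : SLimit C B) :
    SLimit C (fibreF p b) ≃ {c : SLimit C E // limMap p c = b} where
  toFun c := ⟨⟨fun i => (c.1 i).1, fun _ _ f => congrArg Subtype.val (c.2 f)⟩,
    Subtype.ext (funext fun i => (c.1 i).2)⟩
  invFun c := ⟨fun i => ⟨c.1.1 i, congrFun (congrArg Subtype.val c.2) i⟩,
    fun _ _ f => Subtype.ext (c.1.2 f)⟩
  left_inv _ := rfl
  right_inv _ := rfl

theorem IsReedyFibration.reedyFibrant_fibreF {T : TLTT} {E B : SFunctor C} {p : SNat E B}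
    (hp : IsReedyFibration T p) (b : SLimit C B) : ReedyFibrant T (fibreF p b) := by
  intro z c
  let cE : Matching E z := ⟨fun w => (c.1 w).1, fun _ _ h => congrArg Subtype.val (c.2 h)⟩
  have hcE : matchNat p z cE = canMatch B z (b.1 z) :=
    Subtype.ext (funext fun w => (c.1 w).2.trans (b.2 w.2.1).symm)
  refine (hp z ⟨(cE, b.1 z), hcE⟩).of_equiv
    { toFun := fun e => ⟨e.1.1, (relMatchMap_eq_iff p z _ hcE).2
        ⟨Subtype.ext (funext fun w =>
          congrArg Subtype.val (congrFun (congrArg Subtype.val e.2) w)), e.1.2⟩⟩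
      invFun := fun e => ⟨⟨e.1, ((relMatchMap_eq_iff p z _ hcE).1 e.2).2⟩,
        Subtype.ext (funext fun w => Subtype.ext
          (congrFun (congrArg Subtype.val ((relMatchMap_eq_iff p z _ hcE).1 e.2).1) w))⟩
      left_inv := fun _ => rfl
      right_inv := fun _ => rfl }

theorem IsReedyFibration.isFibration_limMap {T : TLTT} {E B : SFunctor C} {p : SNat E B}
    (hp : IsReedyFibration T p)
    (hlim : ∀ W : SFunctor C, ReedyFibrant T W → EssFib T (SLimit C W)) :
    IsFibration T (limMap p) := fun b =>
  (hlim _ (hp.reedyFibrant_fibreF b)).of_equiv (limitFibreEquiv p b).symm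

end Diagrams

section Exponential

variable {C : SCat}

theorem limit_expF_app {F X : SFunctor C} (ξ : SLimit C (expF F X)) {d c : C.Obj}
    (h : C.Hom d c) (a : F.obj c) : (ξ.1 d).app c (a, h) = (ξ.1 c).app c (a, C.id c) := by
  rw [← ξ.2 h]
  show _ = (ξ.1 d).app c (a, C.comp (C.id c) h)
  rw [C.id_comp]

def natEquivLimit (F X : SFunctor C) : SNat F X ≃ SLimit C (expF F X) where
  toFun ρ := ⟨fun _ => ⟨fun c z => ρ.app c z.1, fun f z => ρ.nat f z.1⟩,
    fun _ _ _ => SNat.ext' rfl⟩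
  invFun ξ := ⟨fun d a => (ξ.1 d).app d (a, C.id d), fun {d d'} h a => by
    refine ((ξ.1 d).nat h (a, C.id d)).trans ?_
    show (ξ.1 d).app d' (F.map h a, C.comp h (C.id d)) = _
    rw [C.comp_id, limit_expF_app]⟩
  left_inv _ := SNat.ext' rfl
  right_inv ξ := Subtype.ext (funext fun _ => SNat.ext' (funext fun _ => funext fun z =>
    (limit_expF_app ξ z.2 z.1).symm))

theorem limMap_expMap_natEquivLimit {F G : SFunctor C} (τ : SNat F G) (X : SFunctor C)
    (ρ : SNat G X) :
    limMap (expMap τ X) (natEquivLimit G X ρ) = natEquivLimit F X (natComp ρ τ) :=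
  rfl

variable {G X : SFunctor C} {n : C.Obj}

theorem matching_expF_app (c : Matching (expF G X) n) {w w' : RedCoslice C n}
    (h : (RedCosliceCat C n).Hom w w') (a : G.obj w'.1) :
    (c.1 w).app w'.1 (a, h.1) = (c.1 w').app w'.1 (a, C.id w'.1) := by
  rw [← c.2 h]
  show _ = (c.1 w).app w'.1 (a, C.comp (C.id w'.1) h.1)
  rw [C.id_comp]

def matchingExpToNat (c : Matching (expF G X) n) :
    SNat (restrictRC G n) (restrictRC X n) where
  app w b := (c.1 w).app w.1 (b, C.id w.1)
  nat {w w'} h b := by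
    refine ((c.1 w).nat h.1 (b, C.id w.1)).trans ?_
    show (c.1 w).app w'.1 (G.map h.1 b, C.comp h.1 (C.id w.1)) = _
    rw [C.comp_id]
    exact matching_expF_app c h _

theorem canMatch_app_id {ξ : (expF G X).obj n} {c : Matching (expF G X) n}
    (hξ : canMatch (expF G X) n ξ = c) (a : G.obj n) :
    canMatch X n (ξ.app n (a, C.id n)) = limMap (matchingExpToNat c) (canMatch G n a) := by
  subst hξ
  refine Subtype.ext (funext fun w => ((ξ.nat w.2.1 (a, C.id n)).trans ?_))
  show ξ.app w.1 (G.map w.2.1 a, C.comp w.2.1 (C.id n)) =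
    ξ.app w.1 (G.map w.2.1 a, C.comp (C.id w.1) w.2.1)
  rw [C.comp_id, C.id_comp]

theorem expF_ext {ξ ξ' : (expF G X).obj n}
    (hm : canMatch (expF G X) n ξ = canMatch (expF G X) n ξ')
    (hid : ∀ a, ξ.app n (a, C.id n) = ξ'.app n (a, C.id n)) : ξ = ξ' := by
  refine SNat.ext' (funext fun c => funext fun ⟨a, f⟩ => ?_)
  induction f using notId_cases with
  | notId c f hf =>
    have hw := congrArg (fun m : Matching (expF G X) n => (m.1 ⟨c, f, hf⟩).app c (a, C.id c)) hm
    simpa only [canMatch, expF, C.id_comp] using hw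
  | id => exact hid a

end Exponential

section Extension

variable {C : SCat} {G X : SFunctor C} {n : C.Obj}

open scoped Classical in
noncomputable def extendAt (β : SNat (restrictRC G n) (restrictRC X n))
    (u : G.obj n → X.obj n) (c : C.Obj) (f : C.Hom n c) : G.obj c → X.obj c :=
  if hf : NotId C f then β.app ⟨c, f, hf⟩ else (not_not.mp hf).choose ▸ u

theorem extendAt_of_notId (β : SNat (restrictRC G n) (restrictRC X n))
    (u : G.obj n → X.obj n) {c : C.Obj} {f : C.Hom n c} (hf : NotId C f) :
    extendAt β u c f = β.app ⟨c, f, hf⟩ :=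
  dif_pos hf

theorem extendAt_id (β : SNat (restrictRC G n) (restrictRC X n)) (u : G.obj n → X.obj n) :
    extendAt β u n (C.id n) = u :=
  dif_neg fun h => h ⟨rfl, HEq.rfl⟩

/-- Glues `β` on non-identities with `u` at the identity: `n / C ≅ (n ⫽ C)*` since `C` is
inverse. -/
noncomputable def extendNat (hC : IsInverse C) (β : SNat (restrictRC G n) (restrictRC X n))
    (u : G.obj n → X.obj n) (hu : ∀ a, canMatch X n (u a) = limMap β (canMatch G n a)) :
    (expF G X).obj n where
  app c z := extendAt β u c z.2 z.1
  nat {c c'} h z := by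
    obtain ⟨a, f⟩ := z
    show X.map h (extendAt β u c f a) = extendAt β u c' (C.comp h f) (G.map h a)
    induction f using notId_cases with
    | notId c f hf =>
      rw [extendAt_of_notId β u hf, extendAt_of_notId β u (hC.notId_comp hf h)]
      exact β.nat (i := ⟨c, f, hf⟩) (j := ⟨c', C.comp h f, hC.notId_comp hf h⟩) ⟨h, rfl⟩ a
    | id =>
      rw [C.comp_id, extendAt_id]
      induction h using notId_cases with
      | notId c' h hh =>
        rw [extendAt_of_notId β u hh]
        exact congrFun (congrArg Subtype.val (hu a)) ⟨c', h, hh⟩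
      | id => rw [X.map_id, G.map_id, extendAt_id]

theorem extendNat_app_id (hC : IsInverse C) (β : SNat (restrictRC G n) (restrictRC X n))
    (u : G.obj n → X.obj n) (hu : ∀ a, canMatch X n (u a) = limMap β (canMatch G n a))
    (a : G.obj n) : (extendNat hC β u hu).app n (a, C.id n) = u a :=
  congrFun (extendAt_id β u) a

theorem canMatch_extendNat (hC : IsInverse C) (c : Matching (expF G X) n)
    (u : G.obj n → X.obj n)
    (hu : ∀ a, canMatch X n (u a) = limMap (matchingExpToNat c) (canMatch G n a)) :
    canMatch (expF G X) n (extendNat hC (matchingExpToNat c) u hu) = c := by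
  refine Subtype.ext (funext fun w => SNat.ext' (funext fun d => funext fun ⟨a, v⟩ => ?_))
  have hk : NotId C (C.comp v w.2.1) := hC.notId_comp w.2.2 v
  show extendAt _ u d (C.comp v w.2.1) a = (c.1 w).app d (a, v)
  rw [extendAt_of_notId _ u hk]
  exact (matching_expF_app c (w' := ⟨d, _, hk⟩) ⟨v, rfl⟩ a).symm

noncomputable def expFibreEquiv (hC : IsInverse C) (c : Matching (expF G X) n) :
    {ξ : (expF G X).obj n // canMatch (expF G X) n ξ = c} ≃
      {u : G.obj n → X.obj n //
        ∀ a, canMatch X n (u a) = limMap (matchingExpToNat c) (canMatch G n a)} where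
  toFun ξ := ⟨fun a => ξ.1.app n (a, C.id n), canMatch_app_id ξ.2⟩
  invFun u := ⟨extendNat hC _ u.1 u.2, canMatch_extendNat hC c u.1 u.2⟩
  left_inv ξ := Subtype.ext (expF_ext (by rw [canMatch_extendNat, ξ.2])
    (extendNat_app_id hC _ _ (canMatch_app_id ξ.2)))
  right_inv u := Subtype.ext (funext (extendNat_app_id hC _ u.1 u.2))

end Extension

section ReedyFibration

variable {T : TLTT} {C : SCat} {F G X : SFunctor C} {n : C.Obj}

theorem limMap_matchingExpToNat_matchNat (τ : SNat F G) (c : Matching (expF G X) n)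
    (a : F.obj n) :
    limMap (matchingExpToNat (matchNat (expMap τ X) n c)) (canMatch F n a) =
      limMap (matchingExpToNat c) (canMatch G n (τ.app n a)) :=
  Subtype.ext (funext fun w =>
    congrArg (fun b => (c.1 w).app w.1 (b, C.id w.1)) (τ.nat w.2.1 a).symm)

theorem natComp_prodWhisker_eq_iff (τ : SNat F G) {ξ : (expF G X).obj n}
    {c : Matching (expF G X) n} (hξ : canMatch (expF G X) n ξ = c) {η : (expF F X).obj n}
    (hη : matchNat (expMap τ X) n c = canMatch (expF F X) n η) :
    natComp ξ (prodWhisker τ n) = η ↔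
      ∀ a, ξ.app n (τ.app n a, C.id n) = η.app n (a, C.id n) := by
  refine ⟨fun h a => h ▸ rfl, fun h => expF_ext ?_ h⟩
  rw [← hη, ← hξ, matchNat_canMatch]
  rfl

theorem essFib_expMap_fibre (hC : IsInverse C) (hX : ReedyFibrant T X) (τ : SNat F G)
    (hτ : IsCofibration T (τ.app n)) (c : Matching (expF G X) n) (η : (expF F X).obj n)
    (hη : matchNat (expMap τ X) n c = canMatch (expF F X) n η) :
    EssFib T {ξ : (expF G X).obj n //
      canMatch (expF G X) n ξ = c ∧ natComp ξ (prodWhisker τ n) = η} := by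
  have hcompat (a : F.obj n) : canMatch X n (η.app n (a, C.id n)) =
      limMap (matchingExpToNat c) (canMatch G n (τ.app n a)) := by
    rw [canMatch_app_id hη.symm, limMap_matchingExpToNat_matchNat]
  refine (hτ.essFib_extensions (hX n) _ _ hcompat).of_equiv
    ((Equiv.subtypeSubtypeEquivSubtypeInter _ _).symm.trans
      (((expFibreEquiv hC c).subtypeEquiv fun ξ => ?_).trans
        (Equiv.subtypeSubtypeEquivSubtypeInter _ _)))
  exact natComp_prodWhisker_eq_iff τ ξ.2 hη

theorem isReedyFibration_expMap (hC : IsInverse C) (hX : ReedyFibrant T X) (τ : SNat F G)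
    (hτ : ∀ n, IsCofibration T (τ.app n)) : IsReedyFibration T (expMap τ X) := by
  rintro n ⟨⟨c, η⟩, hη⟩
  exact (essFib_expMap_fibre hC hX τ (hτ n) c η hη).of_equiv
    (Equiv.subtypeEquivRight fun ξ => relMatchMap_eq_iff _ _ _ hη)

end ReedyFibration

def emptyNat {C : SCat} (G : SFunctor C) : SNat (constF C Empty) G :=
  ⟨fun _ => Empty.elim, fun _ a => a.elim⟩

instance {C : SCat} (X : SFunctor C) (d : C.Obj) :
    Unique ((expF (constF C Empty) X).obj d) where
  default := ⟨fun _ z => z.1.elim, fun _ z => z.1.elim⟩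
  uniq _ := SNat.ext' (funext fun _ => funext fun z => z.1.elim)

/-- for a pointwise cofibration `τ : F → G` of diagrams over an
inverse category and a Reedy fibrant `X`, the map `[G,X] → [F,X]` is a Reedy
fibration; consequently `Nat(G,X) → Nat(F,X)` is a fibration when Reedy fibrant
diagrams have fibrant limits, and `Nat(F',X)` is fibrant for pointwise
cofibrant `F'`. -/
theorem exponential_reedy_fibration (T : TLTT) (C : SCat) (hC : IsInverse C)
    (F G X : SFunctor C) (τ : SNat F G) (hτ : ∀ n, TwoLevel.IsCofibration T (τ.app n))
    (hX : ReedyFibrant T X) :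
    IsReedyFibration T (expMap τ X) ∧
    ((∀ W : SFunctor C, ReedyFibrant T W → TwoLevel.EssFib T (SLimit C W)) →
      TwoLevel.IsFibration T (fun η : SNat G X => natComp η τ)) ∧
    (∀ F' : SFunctor C, (∀ n, TwoLevel.Cofibrant T (F'.obj n)) →
      ReedyFibrant T (expF F' X) ∧
      ((∀ W : SFunctor C, ReedyFibrant T W → TwoLevel.EssFib T (SLimit C W)) →
        TwoLevel.EssFib T (SNat F' X))) := by
  have hτX := isReedyFibration_expMap hC hX τ hτ
  refine ⟨hτX, fun hlim => ?_, fun F' hF' => ?_⟩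
  · exact (hτX.isFibration_limMap hlim).of_equiv_comm (natEquivLimit G X) (natEquivLimit F X)
      (limMap_expMap_natEquivLimit τ X)
  · have hF'X : ReedyFibrant T (expF F' X) :=
      (isReedyFibration_expMap hC hX (emptyNat F') fun n =>
        isCofibration_emptyElim (hF' n)).reedyFibrant_of_unique
    exact ⟨hF'X, fun hlim => (hlim _ hF'X).of_equiv (natEquivLimit F' X)⟩
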